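/- arXiv:2507.16750 — 2 statements merged into one kernel-verified Lean document; each statement's English description precedes it below -/
import Mathlib

section
/- Let f : [0,∞) → ℝ be Lebesgue integrable. Then for every ε > 0 there exists a measurable set A_ε ⊆ [0,∞) with Lebesgue measure |A_ε| < ε such that f(r) → 0 as r → ∞ along the complement of A_ε; that is, for every η > 0 there exists R > 0 such that |f(r)| < η for all r ≥ R with r ∉ A_ε. -/
/-!
STATEMENT 13: An `L¹` function on `[0,∞)` tends to `0` at infinity outside a set of
arbitrarily small measure.
-/

open MeasureTheory

/-- If `f` is Lebesgue integrable on `[0,∞)`, then for every `ε > 0` there is a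
measurable set `A_ε ⊆ [0,∞)` of measure `< ε` such that `f(r) → 0` as `r → ∞`
along the complement of `A_ε`. -/
theorem tendsto_zero_off_small_set (f : ℝ → ℝ) (hf : IntegrableOn f (Set.Ici 0)) :
    ∀ ε > (0 : ℝ), ∃ A : Set ℝ, A ⊆ Set.Ici 0 ∧ MeasurableSet A ∧
      volume A < ENNReal.ofReal ε ∧
      ∀ η > (0 : ℝ), ∃ R > (0 : ℝ), ∀ r ≥ R, r ∉ A → |f r| < η := by
  intro ε hε
  -- measurable version of f
  set g : ℝ → ℝ := hf.1.mk f with hg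
  have hgmeas : StronglyMeasurable g := hf.1.stronglyMeasurable_mk
  have hfg : ∀ᵐ x ∂volume, x ∈ Set.Ici (0:ℝ) → f x = g x :=
    (ae_restrict_iff' measurableSet_Ici).1 hf.1.ae_eq_mk
  obtain ⟨N, hNsub, hNmeas, hNnull⟩ :=
    exists_measurable_superset_of_null (ae_iff.1 hfg)
  have hgint : IntegrableOn g (Set.Ici 0) := hf.congr hf.1.ae_eq_mk
  -- small sets series
  obtain ⟨δ, hδpos, hδsum⟩ := ENNReal.exists_pos_sum_of_countable'
    ((ENNReal.ofReal_pos.2 hε).ne') ℕ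
  -- E n : where |g| is at least 1/(n+1), within [0,∞)
  set E : ℕ → Set ℝ := fun n => Set.Ici (0:ℝ) ∩ {x | 1/(n+1:ℝ) ≤ |g x|} with hE
  have hEmeas : ∀ n, MeasurableSet (E n) := fun n =>
    measurableSet_Ici.inter ((measurableSet_le measurable_const
      hgmeas.measurable.norm).congr rfl)
  have hEfin : ∀ n, volume (E n) < ⊤ := by
    intro n
    have := hgint.measure_norm_ge_lt_top
      (ε := 1/(n+1:ℝ)) (by positivity)
    rwa [Measure.restrict_apply' measurableSet_Ici, Set.inter_comm] at this
  -- choose tails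
  have hchoice : ∀ n : ℕ, ∃ m : ℕ, volume (E n ∩ Set.Ici (m:ℝ)) < δ n := by
    intro n
    have hanti : Antitone (fun m : ℕ => E n ∩ Set.Ici (m:ℝ)) := by
      intro a b hab
      exact Set.inter_subset_inter_right _ (Set.Ici_subset_Ici.2 (by exact_mod_cast hab))
    have hiInter : (⋂ m : ℕ, E n ∩ Set.Ici (m:ℝ)) = ∅ := by
      ext x
      simp only [Set.mem_iInter, Set.mem_inter_iff, Set.mem_Ici, Set.mem_empty_iff_false,
        iff_false, not_forall]
      obtain ⟨m, hm⟩ := exists_nat_gt x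
      exact ⟨m, fun h => absurd h.2 (not_le.2 hm)⟩
    have htend := tendsto_measure_iInter_atTop (μ := volume)
      (fun m => ((hEmeas n).inter measurableSet_Ici).nullMeasurableSet) hanti
      ⟨0, ((lt_of_le_of_lt (measure_mono (Set.inter_subset_left)) (hEfin n))).ne⟩
    rw [hiInter, measure_empty] at htend
    have := (htend.eventually_lt_const (hδpos n)).exists
    obtain ⟨m, hm⟩ := this
    exact ⟨m, hm⟩
  choose m hm using hchoice
  refine ⟨(N ∩ Set.Ici 0) ∪ ⋃ n, E n ∩ Set.Ici (m n : ℝ), ?_, ?_, ?_, ?_⟩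
  · rintro x (⟨-, hx⟩ | hx)
    · exact hx
    · obtain ⟨n, hn⟩ := Set.mem_iUnion.1 hx
      exact hn.1.1
  · exact (hNmeas.inter measurableSet_Ici).union
      (MeasurableSet.iUnion fun n => (hEmeas n).inter measurableSet_Ici)
  · calc volume ((N ∩ Set.Ici 0) ∪ ⋃ n, E n ∩ Set.Ici (m n : ℝ))
        ≤ volume (N ∩ Set.Ici 0) + volume (⋃ n, E n ∩ Set.Ici (m n : ℝ)) :=
          measure_union_le _ _
      _ ≤ 0 + ∑' n, volume (E n ∩ Set.Ici (m n : ℝ)) := by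
          gcongr
          · exact le_of_eq (measure_mono_null Set.inter_subset_left hNnull)
          · exact measure_iUnion_le _
      _ < ENNReal.ofReal ε := by
          rw [zero_add]
          exact lt_of_le_of_lt (ENNReal.tsum_le_tsum fun n => (hm n).le) hδsum
  · intro η hη
    obtain ⟨n, hn⟩ := exists_nat_one_div_lt hη
    refine ⟨max (m n : ℝ) 1, lt_of_lt_of_le one_pos (le_max_right _ _), ?_⟩
    intro r hr hrA
    have hr1 : (1:ℝ) ≤ r := le_trans (le_max_right _ _) hr
    have hr0 : r ∈ Set.Ici (0:ℝ) := le_trans zero_le_one hr1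
    have hrN : r ∉ N := fun h => hrA (Or.inl ⟨h, hr0⟩)
    have hfgr : f r = g r := by
      by_contra h
      exact hrN (hNsub (fun himp => h (himp hr0)))
    have hrE : r ∉ E n := by
      intro h
      exact hrA (Or.inr (Set.mem_iUnion.2 ⟨n, h, le_trans (le_max_left _ _) hr⟩))
    have : ¬ (1/(n+1:ℝ) ≤ |g r|) := fun h => hrE ⟨hr0, h⟩
    rw [hfgr]
    calc |g r| < 1/(n+1:ℝ) := not_le.1 this
      _ < η := hn
end

section
/- Let E : ℝ³ → ℝ³ be continuous with ∫_{ℝ³} (1+|x|²)|E(x)|² dx < ∞. Define the radial flux Φ(r) = r² ∫_{𝕊²} ⟨E(rω), ω⟩ dσ(ω) for r > 0, where σ is the standard surface measure on the unit sphere 𝕊² ⊂ ℝ³. If the limit q = lim_{r→∞} Φ(r) exists, then q = 0. (The electric charge at spatial infinity of a field in the weighted space r₊^{−1}L²(ℝ³) vanishes.) -/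
/-!
STATEMENT 14: A continuous electric field in the weighted space `r₊^{-1}L²(ℝ³)`
has vanishing electric charge at spatial infinity: if the limiting radial flux
through large spheres exists, it is zero.
-/

open MeasureTheory
open scoped RealInnerProductSpace

noncomputable section

/-- The radial flux `Φ(r) = r² ∫_{𝕊²} ⟨E(rω), ω⟩ dσ(ω)` of a vector field `E` on
`ℝ³` through the sphere of radius `r`, where `σ` is the standard surface measure on
the unit sphere (the measure `volume.toSphere`, of total mass `4π`). -/
def radialFlux (E : EuclideanSpace ℝ (Fin 3) → EuclideanSpace ℝ (Fin 3)) (r : ℝ) : ℝ :=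
  r ^ 2 * ∫ ω : Metric.sphere (0 : EuclideanSpace ℝ (Fin 3)) 1,
    ⟪E (r • (ω : EuclideanSpace ℝ (Fin 3))), (ω : EuclideanSpace ℝ (Fin 3))⟫
      ∂((volume : Measure (EuclideanSpace ℝ (Fin 3))).toSphere)

namespace ChargeAux

open Metric Set
open scoped ENNReal

abbrev E3 := EuclideanSpace ℝ (Fin 3)

/-- Integrability of continuous functions on the unit sphere. -/
lemma sphere_integrable (f : sphere (0:E3) 1 → ℝ) (hf : Continuous f) :
    Integrable f ((volume : Measure E3).toSphere) :=
  hf.integrable_of_hasCompactSupport (HasCompactSupport.of_compactSpace f)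

/-- Polar-coordinate finiteness of the weighted `L²` norm. -/
lemma finite_polar (E : E3 → E3) (hE : Continuous E)
    (hint : Integrable (fun x : E3 => (1 + ‖x‖ ^ 2) * ‖E x‖ ^ 2)) :
    ∫⁻ r in Ioi (0:ℝ), ENNReal.ofReal (r^2) *
      (ENNReal.ofReal (r^2) * ∫⁻ ω : sphere (0:E3) 1, ENNReal.ofReal (‖E (r • (ω:E3))‖^2)
        ∂(volume : Measure E3).toSphere)
      < ⊤ := by
  set F : E3 → ℝ≥0∞ := fun x => ENNReal.ofReal (‖x‖^2 * ‖E x‖^2) with hF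
  have hFc : Continuous F := by
    apply ENNReal.continuous_ofReal.comp; fun_prop
  have h1 : ∫⁻ x, F x < ⊤ := by
    refine lt_of_le_of_lt (lintegral_mono fun x => ?_) hint.2
    rw [Real.enorm_eq_ofReal (by positivity)]
    refine ENNReal.ofReal_le_ofReal ?_
    simp only []
    nlinarith [sq_nonneg ‖E x‖, sq_nonneg ‖x‖]
  have mp := (volume : Measure E3).measurePreserving_homeomorphUnitSphereProd
  rw [show Module.finrank ℝ E3 - 1 = 2 by simp [finrank_euclideanSpace_fin]] at mp
  have h2 : ∫⁻ x, F x =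
      ∫⁻ p : sphere (0:E3) 1 × Ioi (0:ℝ), F ((p.2 : ℝ) • (p.1 : E3))
        ∂(((volume : Measure E3).toSphere).prod (Measure.volumeIoiPow 2)) := by
    have e1 : ∫⁻ x, F x ∂(volume : Measure E3)
        = ∫⁻ x : ({0}ᶜ : Set E3), F x ∂(Measure.comap Subtype.val (volume : Measure E3)) := by
      rw [lintegral_subtype_comap (measurableSet_singleton (0:E3)).compl,
        MeasureTheory.restrict_compl_singleton]
    rw [e1, ← mp.lintegral_comp_emb (Homeomorph.measurableEmbedding _)]
    refine lintegral_congr fun x => ?_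
    simp only [homeomorphUnitSphereProd_apply_fst_coe, homeomorphUnitSphereProd_apply_snd_coe]
    rw [smul_inv_smul₀ (norm_ne_zero_iff.2 x.2)]
  have hmeas : Measurable fun p : sphere (0:E3) 1 × Ioi (0:ℝ) => F ((p.2 : ℝ) • (p.1 : E3)) := by
    apply hFc.measurable.comp
    fun_prop
  have h3 : ∫⁻ p : sphere (0:E3) 1 × Ioi (0:ℝ), F ((p.2 : ℝ) • (p.1 : E3))
        ∂(((volume : Measure E3).toSphere).prod (Measure.volumeIoiPow 2))
      = ∫⁻ r : Ioi (0:ℝ), (∫⁻ ω : sphere (0:E3) 1, F ((r:ℝ) • (ω:E3))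
          ∂(volume : Measure E3).toSphere) ∂(Measure.volumeIoiPow 2) := by
    rw [lintegral_prod_symm _ hmeas.aemeasurable]
  have hGmeas : Measurable fun r : Ioi (0:ℝ) => ∫⁻ ω : sphere (0:E3) 1, F ((r:ℝ) • (ω:E3))
      ∂(volume : Measure E3).toSphere := by
    exact Measurable.lintegral_prod_right (f := fun (r : Ioi (0:ℝ)) (ω : sphere (0:E3) 1) =>
      F ((r:ℝ) • (ω:E3))) (by apply hFc.measurable.comp; fun_prop)
  have h4 : ∫⁻ r : Ioi (0:ℝ), (∫⁻ ω : sphere (0:E3) 1, F ((r:ℝ) • (ω:E3))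
          ∂(volume : Measure E3).toSphere) ∂(Measure.volumeIoiPow 2)
      = ∫⁻ r in Ioi (0:ℝ), ENNReal.ofReal (r^2) *
          (∫⁻ ω : sphere (0:E3) 1, F (r • (ω:E3)) ∂(volume : Measure E3).toSphere) := by
    rw [Measure.volumeIoiPow, lintegral_withDensity_eq_lintegral_mul _
      (by fun_prop) hGmeas, ← lintegral_subtype_comap measurableSet_Ioi]
    exact lintegral_congr fun x => rfl
  have h5 : ∀ r ∈ Ioi (0:ℝ), ∫⁻ ω : sphere (0:E3) 1, F (r • (ω:E3)) ∂(volume : Measure E3).toSphere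
      = ENNReal.ofReal (r^2) * ∫⁻ ω : sphere (0:E3) 1, ENNReal.ofReal (‖E (r • (ω:E3))‖^2)
        ∂(volume : Measure E3).toSphere := by
    intro r hr
    rw [← lintegral_const_mul _ (by apply Measurable.ennreal_ofReal; fun_prop)]
    refine lintegral_congr fun ω => ?_
    have hω : ‖(ω:E3)‖ = 1 := by simpa using mem_sphere_zero_iff_norm.mp ω.2
    have : ‖r • (ω:E3)‖ = r := by
      rw [norm_smul, hω, mul_one, Real.norm_eq_abs, abs_of_pos hr]
    rw [hF]
    simp only [this]
    rw [← ENNReal.ofReal_mul (by positivity)]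
  calc ∫⁻ r in Ioi (0:ℝ), ENNReal.ofReal (r^2) *
      (ENNReal.ofReal (r^2) * ∫⁻ ω : sphere (0:E3) 1, ENNReal.ofReal (‖E (r • (ω:E3))‖^2)
        ∂(volume : Measure E3).toSphere)
      = ∫⁻ x, F x := by
        rw [h2, h3, h4]
        exact (setLIntegral_congr_fun measurableSet_Ioi
          (fun r hr => by rw [h5 r hr])).symm
    _ < ⊤ := h1

/-- Slice bound: the flux through the sphere of radius `r` is controlled by the
`L²` norm of `E` on that sphere via the AM-GM inequality. -/
lemma slice_bound (E : E3 → E3) (hE : Continuous E) (r : ℝ) (hr : 0 < r) (δ : ℝ) (hδ : 0 < δ) :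
    |radialFlux E r| ≤ δ/2 * ((volume : Measure E3).toSphere univ).toReal
      + (r^4 * ∫ ω : sphere (0:E3) 1, ‖E (r • (ω:E3))‖^2 ∂(volume : Measure E3).toSphere)/(2*δ) := by
  set A := ((volume : Measure E3).toSphere univ).toReal with hA
  have hA0 : 0 ≤ A := ENNReal.toReal_nonneg
  set ε := δ / r^2 with hε
  have hε0 : 0 < ε := by positivity
  have c1 : Continuous fun ω : sphere (0:E3) 1 => ⟪E (r • (ω:E3)), (ω:E3)⟫ :=
    (hE.comp ((continuous_const : Continuous fun _ : sphere (0:E3) 1 => r).smul continuous_subtype_val)).inner continuous_subtype_val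
  have c2 : Continuous fun ω : sphere (0:E3) 1 => ‖E (r • (ω:E3))‖ := by fun_prop
  have c3 : Continuous fun ω : sphere (0:E3) 1 => ‖E (r • (ω:E3))‖^2 := by fun_prop
  have h6 : |∫ ω : sphere (0:E3) 1, ⟪E (r • (ω:E3)), (ω:E3)⟫ ∂(volume : Measure E3).toSphere|
      ≤ ∫ ω : sphere (0:E3) 1, ‖E (r • (ω:E3))‖ ∂(volume : Measure E3).toSphere := by
    rw [← Real.norm_eq_abs]
    refine le_trans (norm_integral_le_integral_norm _) ?_
    refine integral_mono (sphere_integrable _ c1.norm) (sphere_integrable _ c2) fun ω => ?_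
    have hω : ‖(ω:E3)‖ = 1 := by simpa using mem_sphere_zero_iff_norm.mp ω.2
    simpa [Real.norm_eq_abs, hω] using abs_real_inner_le_norm (E (r • (ω:E3))) (ω:E3)
  have h7 : ∫ ω : sphere (0:E3) 1, ‖E (r • (ω:E3))‖ ∂(volume : Measure E3).toSphere
      ≤ ε/2 * A + (∫ ω : sphere (0:E3) 1, ‖E (r • (ω:E3))‖^2 ∂(volume : Measure E3).toSphere)/(2*ε) := by
    have : ∫ ω : sphere (0:E3) 1, ‖E (r • (ω:E3))‖ ∂(volume : Measure E3).toSphere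
        ≤ ∫ ω : sphere (0:E3) 1, (ε/2 + ‖E (r • (ω:E3))‖^2/(2*ε)) ∂(volume : Measure E3).toSphere := by
      refine integral_mono (sphere_integrable _ c2) (sphere_integrable _ (by fun_prop)) fun ω => ?_
      have := sq_nonneg (‖E (r • (ω:E3))‖ - ε)
      rw [div_add_div _ _ (two_ne_zero) (by positivity), le_div_iff₀ (by positivity)]
      nlinarith
    refine this.trans_eq ?_
    rw [integral_add (integrable_const _) ((sphere_integrable _ c3).div_const _), integral_const,
      integral_div, smul_eq_mul, measureReal_def]
    ring
  have habs : |radialFlux E r| = r^2 * |∫ ω : sphere (0:E3) 1, ⟪E (r • (ω:E3)), (ω:E3)⟫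
      ∂(volume : Measure E3).toSphere| := by
    rw [radialFlux, abs_mul, abs_of_nonneg (by positivity : (0:ℝ) ≤ r^2)]
  have hT0 : 0 ≤ ∫ ω : sphere (0:E3) 1, ‖E (r • (ω:E3))‖^2 ∂(volume : Measure E3).toSphere :=
    integral_nonneg fun ω => sq_nonneg _
  rw [habs]
  have := mul_le_mul_of_nonneg_left (h6.trans h7) (by positivity : (0:ℝ) ≤ r^2)
  refine this.trans_eq ?_
  rw [hε]
  field_simp

end ChargeAux

/-- The electric charge at spatial infinity of a continuous field with
`∫ (1+|x|²)|E|² < ∞` vanishes: if `Φ(r)` converges as `r → ∞`, the limit is `0`. -/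
theorem charge_at_infinity_eq_zero
    (E : EuclideanSpace ℝ (Fin 3) → EuclideanSpace ℝ (Fin 3)) (hE : Continuous E)
    (hint : Integrable (fun x : EuclideanSpace ℝ (Fin 3) => (1 + ‖x‖ ^ 2) * ‖E x‖ ^ 2))
    (q : ℝ) (hq : Filter.Tendsto (radialFlux E) Filter.atTop (nhds q)) :
    q = 0 := by
  open Metric Set ChargeAux in
  open scoped ENNReal in
  by_contra hq0
  have hq1 : 0 < |q| := abs_pos.mpr hq0
  set A := ((volume : Measure E3).toSphere univ).toReal with hA
  have hA0 : 0 ≤ A := ENNReal.toReal_nonneg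
  set δ := |q| / (2*(A+1)) with hδdef
  have hδ : 0 < δ := by positivity
  obtain ⟨R, hR⟩ := Metric.tendsto_atTop.mp hq (|q|/2) (by positivity)
  set R' := max R 1 with hR'
  have hR'1 : (1:ℝ) ≤ R' := le_max_right _ _
  have hlow : ∀ r ∈ Ioi R', ENNReal.ofReal (δ*|q|/2) ≤ ENNReal.ofReal (r^2) *
      (ENNReal.ofReal (r^2) * ∫⁻ ω : sphere (0:E3) 1, ENNReal.ofReal (‖E (r • (ω:E3))‖^2)
        ∂(volume : Measure E3).toSphere) := by
    intro r hr
    have hr0 : 0 < r := lt_of_lt_of_le one_pos (hR'1.trans (le_of_lt hr))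
    have h1 : |q|/2 ≤ |radialFlux E r| := by
      have hd := hR r (le_of_lt (lt_of_le_of_lt (le_max_left R 1) hr))
      rw [Real.dist_eq] at hd
      have : |q| ≤ |radialFlux E r - q| + |radialFlux E r| := by
        calc |q| = |(q - radialFlux E r) + radialFlux E r| := by ring_nf
          _ ≤ |q - radialFlux E r| + |radialFlux E r| := abs_add_le _ _
          _ = |radialFlux E r - q| + |radialFlux E r| := by rw [abs_sub_comm]
      linarith
    have h2 := slice_bound E hE r hr0 δ hδ
    set T := ∫ ω : sphere (0:E3) 1, ‖E (r • (ω:E3))‖^2 ∂(volume : Measure E3).toSphere with hT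
    have hT0 : 0 ≤ T := integral_nonneg fun ω => sq_nonneg _
    have hδA : δ * A ≤ |q|/2 := by
      rw [hδdef]
      rw [div_mul_eq_mul_div, div_le_div_iff₀ (by positivity) (by positivity)]
      nlinarith
    have h3 : δ*|q|/2 ≤ r^4 * T := by
      have h4 : |q|/2 ≤ δ/2 * A + (r^4 * T)/(2*δ) := h1.trans h2
      have h5 : |q|/2 - δ/2*A ≤ r^4*T/(2*δ) := by linarith
      have h6 : (|q|/2 - δ/2*A) * (2*δ) ≤ r^4*T := by rwa [← le_div_iff₀ (by positivity)]
      nlinarith [mul_le_mul_of_nonneg_left hδA hδ.le]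
    have hS : (∫⁻ ω : sphere (0:E3) 1, ENNReal.ofReal (‖E (r • (ω:E3))‖^2)
        ∂(volume : Measure E3).toSphere) = ENNReal.ofReal T := by
      rw [hT, ofReal_integral_eq_lintegral_ofReal (sphere_integrable _ (by fun_prop))
        (Filter.Eventually.of_forall fun ω => sq_nonneg _)]
    rw [hS, ← ENNReal.ofReal_mul (by positivity), ← ENNReal.ofReal_mul (by positivity)]
    refine ENNReal.ofReal_le_ofReal ?_
    nlinarith
  have hfin := finite_polar E hE hint
  have htop : (⊤:ℝ≥0∞) ≤ ∫⁻ r in Ioi (0:ℝ), ENNReal.ofReal (r^2) *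
      (ENNReal.ofReal (r^2) * ∫⁻ ω : sphere (0:E3) 1, ENNReal.ofReal (‖E (r • (ω:E3))‖^2)
        ∂(volume : Measure E3).toSphere) := by
    calc (⊤:ℝ≥0∞) = ENNReal.ofReal (δ*|q|/2) * volume (Ioi R') := by
          rw [Real.volume_Ioi, ENNReal.mul_top (ENNReal.ofReal_pos.mpr (by positivity)).ne']
      _ = ∫⁻ _ in Ioi R', ENNReal.ofReal (δ*|q|/2) := (setLIntegral_const _ _).symm
      _ ≤ ∫⁻ r in Ioi R', ENNReal.ofReal (r^2) *
          (ENNReal.ofReal (r^2) * ∫⁻ ω : sphere (0:E3) 1, ENNReal.ofReal (‖E (r • (ω:E3))‖^2)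
            ∂(volume : Measure E3).toSphere) := setLIntegral_mono' measurableSet_Ioi hlow
      _ ≤ _ := lintegral_mono_set (Ioi_subset_Ioi (le_of_lt (lt_of_lt_of_le one_pos hR'1)))
  exact absurd hfin (by rw [top_le_iff.mp htop]; exact lt_irrefl _)
end
end
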